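/- Let 𝔊 be a coherator for n-groupoids. Every model X of 𝔊 is fibrant: the unique map X → ∗ to the terminal model has the right lifting property with respect to every source map σ_k : D_k → D_{k+1} (0 ≤ k ≤ n−1). Equivalently, every map in the generating set J_n admits the required lifts against X → ∗, because each σ_k admits a retraction in 𝔊. -/

import Mathlib

open CategoryTheory Opposite

namespace GPaper

/-! ## The globe category and its truncations

The globe category `𝔾` is the quotient of the free category on the graph with two arrows
`σ_k, τ_k : k → k+1` by the coglobular relations `σ∘σ = τ∘σ`, `σ∘τ = τ∘τ`.  Concretely, a
non-identity morphism `m ⟶ p` (for `m < p`) is uniquely determined by whether its first letter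
is a cosource (`false`) or a cotarget (`true`); we use this normal form as the definition. -/

inductive GlobHom : ℕ → ℕ → Type where
  | id (m : ℕ) : GlobHom m m
  | gen (b : Bool) {m p : ℕ} (h : m < p) : GlobHom m p

def GlobHom.comp : ∀ {m p q : ℕ}, GlobHom m p → GlobHom p q → GlobHom m q
  | _, _, _, .id _, g => g
  | _, _, _, f, .id _ => f
  | _, _, _, .gen b h, .gen _ h' => .gen b (h.trans h')

/-- Objects of the `n`-truncated globe category `𝔾_n` (`n = ⊤` gives the full globe category). -/
structure Gle (n : ℕ∞) where
  val : ℕ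
  isLe : (val : ℕ∞) ≤ n

theorem Gle.ext' {n : ℕ∞} {a b : Gle n} (h : a.val = b.val) : a = b := by
  cases a; cases b; cases h; rfl

theorem GlobHom.id_comp' : ∀ {m p : ℕ} (f : GlobHom m p), (GlobHom.id m).comp f = f := by
  intro m p f; cases f <;> rfl

theorem GlobHom.comp_id' : ∀ {m p : ℕ} (f : GlobHom m p), f.comp (GlobHom.id p) = f := by
  intro m p f; cases f <;> rfl

theorem GlobHom.assoc' : ∀ {m p q r : ℕ} (f : GlobHom m p) (g : GlobHom p q) (h : GlobHom q r),
    (f.comp g).comp h = f.comp (g.comp h) := by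
  intro m p q r f g h; cases f <;> cases g <;> cases h <;> rfl

instance (n : ℕ∞) : Category (Gle n) where
  Hom a b := GlobHom a.val b.val
  id a := GlobHom.id a.val
  comp f g := f.comp g
  id_comp f := GlobHom.id_comp' f
  comp_id f := GlobHom.comp_id' f
  assoc f g h := GlobHom.assoc' f g h

variable {n : ℕ∞}

/-- The cosource map `σ : a → b`. -/
def sg {a b : Gle n} (h : a.val < b.val) : a ⟶ b := GlobHom.gen false h
/-- The cotarget map `τ : a → b`. -/
def tg {a b : Gle n} (h : a.val < b.val) : a ⟶ b := GlobHom.gen true h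
/-- The cosource map, or the identity if the dimensions agree. -/
def sge {a b : Gle n} (h : a.val ≤ b.val) : a ⟶ b :=
  if e : a.val = b.val then eqToHom (Gle.ext' e) else sg (lt_of_le_of_ne h e)
/-- The cotarget map, or the identity if the dimensions agree. -/
def tge {a b : Gle n} (h : a.val ≤ b.val) : a ⟶ b :=
  if e : a.val = b.val then eqToHom (Gle.ext' e) else tg (lt_of_le_of_ne h e)

/-- `k` is an allowed dimension for the truncation parameter `n`. -/
def inR (n : ℕ∞) (k : ℕ) : Prop := (k : ℕ∞) ≤ n

/-! ## Tables of dimensions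

A table of dimensions `(i₁, …, i_q ; i'₁, …, i'_{q-1})` with `i'_k < i_k`, `i'_k < i_{k+1}`
is stored as the first top entry together with a list of pairs (separator, next top entry). -/

def TV (n : ℕ∞) : ℕ → List (ℕ × ℕ) → Prop
  | h, [] => inR n h
  | h, (i', j) :: l => inR n h ∧ i' < h ∧ i' < j ∧ TV n j l

theorem TV.headLe : ∀ {h : ℕ} {l : List (ℕ × ℕ)}, TV n h l → inR n h
  | _, [], v => v
  | _, (_, _) :: _, v => v.1

theorem TV.midLe {h i' j : ℕ} {l : List (ℕ × ℕ)} (v : TV n h ((i', j) :: l)) : inR n i' :=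
  le_trans (Nat.cast_le.mpr (le_of_lt v.2.1)) v.1

/-- A table of dimensions, with all entries bounded by `n`. -/
structure DimTable (n : ℕ∞) where
  head : ℕ
  rest : List (ℕ × ℕ)
  valid : TV n head rest

def maxL (l : List (ℕ × ℕ)) : ℕ := l.foldr (fun p a => max p.2 a) 0

/-- The dimension of a table: the maximum of its top entries. -/
def DimTable.dim (T : DimTable n) : ℕ := max T.head (maxL T.rest)

/-! ## Families indexed by the zig-zag of a table -/

/-- A family of points, one for each top entry of a table. -/
def Pts (P : Gle n → Type) : ∀ (h : ℕ) (l : List (ℕ × ℕ)), TV n h l → Type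
  | h, [], v => P ⟨h, v⟩
  | h, (_, j) :: l, v => P ⟨h, v.1⟩ × Pts P j l v.2.2.2

def Pts.head {P : Gle n → Type} : ∀ {h l v}, Pts P h l v → P ⟨h, TV.headLe v⟩
  | _, [], _, x => x
  | _, _ :: _, _, x => x.1

def Pts.mapP {P Q : Gle n → Type} (φ : ∀ g : Gle n, P g → Q g) :
    ∀ {h l v}, Pts P h l v → Pts Q h l v
  | _, [], _, x => φ _ x
  | _, _ :: _, _, x => (φ _ x.1, Pts.mapP φ x.2)

def Pts.setHead {P : Gle n → Type} : ∀ {h l v}, Pts P h l v → P ⟨h, TV.headLe v⟩ → Pts P h l v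
  | _, [], _, _, y => y
  | _, _ :: _, _, x, y => (y, x.2)

def Pts.toSet {P : Gle n → Type} : ∀ {h l v}, Pts P h l v → Set (Σ g : Gle n, P g)
  | h, [], v, x => {⟨⟨h, v⟩, x⟩}
  | h, _ :: _, v, x => insert ⟨⟨h, v.1⟩, x.1⟩ (Pts.toSet x.2)

/-- Compatibility of a family with the zig-zag maps of the table, relative to a pair of
"restriction along σ" and "restriction along τ" operations. -/
def PtsOk {P : Gle n → Type} (rS rT : ∀ (a b : Gle n), a.val < b.val → P b → P a) :
    ∀ {h l v}, Pts P h l v → Prop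
  | _, [], _, _ => True
  | h, (i', j) :: l, v, x =>
      rS ⟨i', TV.midLe v⟩ ⟨h, v.1⟩ v.2.1 x.1 =
        rT ⟨i', TV.midLe v⟩ ⟨j, TV.headLe v.2.2.2⟩ v.2.2.1 (Pts.head x.2) ∧
      PtsOk rS rT x.2

theorem Pts.mapP_mapP {P Q R : Gle n → Type} (φ : ∀ g, P g → Q g) (ψ : ∀ g, Q g → R g) :
    ∀ {h l v} (x : Pts P h l v),
      Pts.mapP ψ (Pts.mapP φ x) = Pts.mapP (fun g a => ψ g (φ g a)) x
  | _, [], _, _ => rfl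
  | _, _ :: _, _, x => by
      simp only [Pts.mapP]
      exact congrArg _ (Pts.mapP_mapP φ ψ x.2)

theorem Pts.mapP_ext {P Q : Gle n → Type} {φ ψ : ∀ g, P g → Q g}
    (h : ∀ g a, φ g a = ψ g a) :
    ∀ {h' l v} (x : Pts P h' l v), Pts.mapP φ x = Pts.mapP ψ x
  | _, [], _, x => h _ x
  | _, _ :: _, _, x => by
      simp only [Pts.mapP]
      exact congrArg₂ _ (h _ x.1) (Pts.mapP_ext h x.2)
/-! ## Globular sums and globular theories

Following the skeletal description of `Θ₀` (objects = tables of dimensions), a globular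
theory is a category equipped with a coglobular object, a chosen colimit cocone ("globular
sum") for the zig-zag diagram of every table, such that the resulting assignment
`table ↦ apex` is bijective on objects (this encodes a bijective-on-objects, globular sums
preserving functor out of `Θ₀`). -/

/-- A cocone on the zig-zag of globes determined by a table `T`, with respect to a coglobular
object `G`. -/
structure SCone {C : Type*} [Category C] (G : Gle n ⥤ C) (T : DimTable n) where
  pt : C
  legs : Pts (fun g => G.obj g ⟶ pt) T.head T.rest T.valid
  ok : PtsOk (fun a b hab f => G.map (sg hab) ≫ f) (fun a b hab f => G.map (tg hab) ≫ f) legs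

/-- Post-composition of the legs of a cocone with a morphism out of its apex. -/
def SCone.post {C : Type*} [Category C] {G : Gle n ⥤ C} {T : DimTable n} (c : SCone G T)
    {X : C} (u : c.pt ⟶ X) : Pts (fun g => G.obj g ⟶ X) T.head T.rest T.valid :=
  Pts.mapP (fun _ f => f ≫ u) c.legs

/-- The cocone is a colimit of the zig-zag diagram. -/
def IsSColim {C : Type*} [Category C] {G : Gle n ⥤ C} {T : DimTable n} (c : SCone G T) : Prop :=
  ∀ (X : C) (fs : Pts (fun g => G.obj g ⟶ X) T.head T.rest T.valid),
    PtsOk (fun a b hab f => G.map (sg hab) ≫ f) (fun a b hab f => G.map (tg hab) ≫ f) fs →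
    ∃! u : c.pt ⟶ X, c.post u = fs

/-- An `n`-globular theory. -/
structure GlobTheory (n : ℕ∞) : Type 2 where
  E : Type 1
  [cat : Category.{0} E]
  G : Gle n ⥤ E
  sum : ∀ T : DimTable n, SCone G T
  isColim : ∀ T : DimTable n, IsSColim (sum T)
  obj_bij : Function.Bijective (fun T : DimTable n => (sum T).pt)

attribute [instance] GlobTheory.cat

/-- The globe `D_k` of the theory. -/
def GlobTheory.D (Th : GlobTheory n) (k : ℕ) (hk : inR n k) : Th.E := Th.G.obj ⟨k, hk⟩

/-! ## Models of a globular theory -/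

/-- The set of `g`-cells of a presheaf on the theory. -/
def cellP (Th : GlobTheory n) (X : Th.Eᵒᵖ ⥤ Type) (g : Gle n) : Type := X.obj (op (Th.G.obj g))

/-- Restriction along the cosource maps. -/
def resS (Th : GlobTheory n) (X : Th.Eᵒᵖ ⥤ Type) (a b : Gle n) (hab : a.val < b.val) :
    cellP Th X b → cellP Th X a := X.map (op (Th.G.map (sg hab)))

/-- Restriction along the cotarget maps. -/
def resT (Th : GlobTheory n) (X : Th.Eᵒᵖ ⥤ Type) (a b : Gle n) (hab : a.val < b.val) :
    cellP Th X b → cellP Th X a := X.map (op (Th.G.map (tg hab)))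

/-- A presheaf on the theory is a model if it sends every globular sum to the corresponding
limit: compatible families of cells indexed by a table correspond bijectively to cells of
shape the globular sum of that table. -/
def IsModel (Th : GlobTheory n) (X : Th.Eᵒᵖ ⥤ Type) : Prop :=
  ∀ T : DimTable n,
    ∀ fam : Pts (cellP Th X) T.head T.rest T.valid,
      PtsOk (resS Th X) (resT Th X) fam →
      ∃! y : X.obj (op (Th.sum T).pt),
        Pts.mapP (fun _ leg => X.map leg.op y) (Th.sum T).legs = fam

/-- The category of models of a globular theory. -/
def Mod (Th : GlobTheory n) := ObjectProperty.FullSubcategory (IsModel Th)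

instance (Th : GlobTheory n) : Category (Mod Th) :=
  show Category (ObjectProperty.FullSubcategory _) from inferInstance

/-- Representable presheaves are models. -/
theorem isModel_yoneda (Th : GlobTheory n) (A : Th.E) : IsModel Th (yoneda.obj A) :=
  fun T fam hfam => Th.isColim T A fam hfam

/-- The representable model on an object of the theory. -/
def dModA (Th : GlobTheory n) (A : Th.E) : Mod Th := ⟨yoneda.obj A, isModel_yoneda Th A⟩

/-- The representable model `D_g` on a globe. -/
def dMod (Th : GlobTheory n) (g : Gle n) : Mod Th := dModA Th (Th.G.obj g)

/-- The source map `σ : D_j → D_k` of representable models. -/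
def sgMod (Th : GlobTheory n) {a b : Gle n} (h : a.val < b.val) : dMod Th a ⟶ dMod Th b :=
  ⟨yoneda.map (Th.G.map (sg h))⟩

/-- The target map `τ : D_j → D_k` of representable models. -/
def tgMod (Th : GlobTheory n) {a b : Gle n} (h : a.val < b.val) : dMod Th a ⟶ dMod Th b :=
  ⟨yoneda.map (Th.G.map (tg h))⟩

/-- The `g`-cells of a model. -/
def cl {Th : GlobTheory n} (X : Mod Th) (g : Gle n) : Type := cellP Th X.obj g

/-- Action of a morphism of models on cells. -/
def fapp {Th : GlobTheory n} {X Y : Mod Th} (f : X ⟶ Y) (g : Gle n) : cl X g → cl Y g :=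
  f.hom.app (op (Th.G.obj g))

/-- The (iterated) source of a cell. -/
def csrc {Th : GlobTheory n} {X : Mod Th} {a b : Gle n} (h : a.val < b.val) :
    cl X b → cl X a := resS Th X.obj a b h

/-- The (iterated) target of a cell. -/
def ctgt {Th : GlobTheory n} {X : Mod Th} {a b : Gle n} (h : a.val < b.val) :
    cl X b → cl X a := resT Th X.obj a b h

/-- Two cells of the same dimension are parallel if their sources and targets agree
(vacuously true in dimension `0`). -/
def Par {Th : GlobTheory n} {X : Mod Th} {k : Gle n} (x y : cl X k) : Prop :=
  ∀ (j : Gle n) (hj : j.val + 1 = k.val),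
    csrc (show j.val < k.val by omega) x = csrc (show j.val < k.val by omega) y ∧
    ctgt (show j.val < k.val by omega) x = ctgt (show j.val < k.val by omega) y

/-! ## Lifting properties, (trivial) cofibrations and fibrations, weak equivalences -/

/-- Existence of diagonal fillers for all commutative squares with left leg `l`
and right leg `r`. -/
def SqLift {Th : GlobTheory n} {A B P Q : Mod Th} (l : A ⟶ B) (r : P ⟶ Q) : Prop :=
  ∀ (u : A ⟶ P) (v : B ⟶ Q), u ≫ r = l ≫ v → ∃ d : B ⟶ P, l ≫ d = u ∧ d ≫ r = v

/-- `f` is a trivial fibration: it has the right lifting property with respect to the set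
`I` of boundary inclusions `S^{k-1} → D_k` (for `k ≤ n`), together with, for finite `n`,
the collapse map `(1,1) : Sⁿ → Dⁿ`.  This is expressed elementwise via the universal
property of the sphere objects. -/
def InjI {Th : GlobTheory n} {X Y : Mod Th} (f : X ⟶ Y) : Prop :=
  (∀ g : Gle n, g.val = 0 → ∀ y : cl Y g, ∃ x : cl X g, fapp f g x = y) ∧
  (∀ (j k : Gle n) (hj : j.val + 1 = k.val) (a b : cl X j), Par a b →
     ∀ c : cl Y k, csrc (show j.val < k.val by omega) c = fapp f j a →
       ctgt (show j.val < k.val by omega) c = fapp f j b →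
       ∃ e : cl X k, csrc (show j.val < k.val by omega) e = a ∧
         ctgt (show j.val < k.val by omega) e = b ∧ fapp f k e = c) ∧
  (∀ k : Gle n, ¬ inR n (k.val + 1) → ∀ a b : cl X k, Par a b →
     fapp f k a = fapp f k b → a = b)

/-- `f` is a fibration: it has the right lifting property with respect to the set `J` of
source maps `σ_k : D_k → D_{k+1}`, expressed elementwise. -/
def InjJ {Th : GlobTheory n} {X Y : Mod Th} (f : X ⟶ Y) : Prop :=
  ∀ (j k : Gle n) (hj : j.val + 1 = k.val) (a : cl X j) (c : cl Y k),
    csrc (show j.val < k.val by omega) c = fapp f j a →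
    ∃ e : cl X k, csrc (show j.val < k.val by omega) e = a ∧ fapp f k e = c

/-- Right lifting property against the target maps `τ_k : D_k → D_{k+1}`, elementwise. -/
def InjJtau {Th : GlobTheory n} {X Y : Mod Th} (f : X ⟶ Y) : Prop :=
  ∀ (j k : Gle n) (hj : j.val + 1 = k.val) (a : cl X j) (c : cl Y k),
    ctgt (show j.val < k.val by omega) c = fapp f j a →
    ∃ e : cl X k, ctgt (show j.val < k.val by omega) e = a ∧ fapp f k e = c

/-- Cofibrations: maps with the left lifting property against all trivial fibrations. -/
def IsCofib {Th : GlobTheory n} {A B : Mod Th} (l : A ⟶ B) : Prop :=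
  ∀ {P Q : Mod Th} (r : P ⟶ Q), InjI r → SqLift l r

/-- Maps in the saturation of `J`: maps with the left lifting property against all
fibrations. -/
def IsTrivCofib {Th : GlobTheory n} {A B : Mod Th} (l : A ⟶ B) : Prop :=
  ∀ {P Q : Mod Th} (r : P ⟶ Q), InjJ r → SqLift l r

/-- An object is fibrant if the unique map to the terminal object is a fibration
(elementwise formulation). -/
def FibrantObj {Th : GlobTheory n} (X : Mod Th) : Prop :=
  ∀ (j k : Gle n) (hj : j.val + 1 = k.val) (a : cl X j),
    ∃ e : cl X k, csrc (show j.val < k.val by omega) e = a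

/-- An object is contractible if the unique map to the terminal object is a trivial
fibration (elementwise formulation). -/
def ContractibleObj {Th : GlobTheory n} (X : Mod Th) : Prop :=
  (∀ g : Gle n, g.val = 0 → Nonempty (cl X g)) ∧
  (∀ (j k : Gle n) (hj : j.val + 1 = k.val) (a b : cl X j), Par a b →
     ∃ e : cl X k, csrc (show j.val < k.val by omega) e = a ∧
       ctgt (show j.val < k.val by omega) e = b) ∧
  (∀ k : Gle n, ¬ inR n (k.val + 1) → ∀ a b : cl X k, Par a b → a = b)

/-- The class `W` of weak equivalences: `f : X → Y` is in `W` when every commutative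
square from a boundary inclusion `S^{k-1} → D_k` to `f` admits a lift of the top which is a
lift up to homotopy of the bottom (expressed elementwise; at the top dimension, for finite
`n`, "up to homotopy" means equality). -/
def WHtpy {Th : GlobTheory n} {X Y : Mod Th} (f : X ⟶ Y) {k : Gle n}
    (e : cl X k) (c : cl Y k) : Prop :=
  (∀ (k' : Gle n) (hk' : k.val + 1 = k'.val),
      ∃ H : cl Y k', csrc (show k.val < k'.val by omega) H = fapp f k e ∧
        ctgt (show k.val < k'.val by omega) H = c) ∧
  (inR n (k.val + 1) ∨ fapp f k e = c)

def IsWeq {Th : GlobTheory n} {X Y : Mod Th} (f : X ⟶ Y) : Prop :=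
  (∀ g : Gle n, g.val = 0 → ∀ c : cl Y g, ∃ e : cl X g, WHtpy f e c) ∧
  (∀ (j k : Gle n) (hj : j.val + 1 = k.val) (a b : cl X j), Par a b →
     ∀ c : cl Y k, csrc (show j.val < k.val by omega) c = fapp f j a →
       ctgt (show j.val < k.val by omega) c = fapp f j b →
       ∃ e : cl X k, csrc (show j.val < k.val by omega) e = a ∧
         ctgt (show j.val < k.val by omega) e = b ∧ WHtpy f e c)

/-- `f` is a retract of `g` in the arrow category. -/
def IsRetractOf {Th : GlobTheory n} {X Y W Z : Mod Th} (f : X ⟶ Y) (g : W ⟶ Z) : Prop :=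
  ∃ (a : X ⟶ W) (b : W ⟶ X) (c : Y ⟶ Z) (d : Z ⟶ Y),
    a ≫ b = 𝟙 X ∧ c ≫ d = 𝟙 Y ∧ a ≫ g = f ≫ c ∧ g ≫ d = b ≫ f

/-- The initial (empty) model. -/
def emptyMod (Th : GlobTheory n) : Mod Th :=
  ⟨(Functor.const _).obj PEmpty, fun _ fam _ => PEmpty.elim (Pts.head fam)⟩

/-- The unique map out of the empty model. -/
def emptyTo {Th : GlobTheory n} (X : Mod Th) : emptyMod Th ⟶ X where
  hom.app _ := TypeCat.ofHom fun x => PEmpty.elim x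
  hom.naturality := by intro Z Z' h; ext x; exact PEmpty.elim x

/-- An object is cofibrant if the map from the initial model is a cofibration. -/
def CofObj {Th : GlobTheory n} (X : Mod Th) : Prop := IsCofib (emptyTo X)

/-- The path-object datum used in the recognition theorem: a fibration `PX → X × X`
whose composites with the two projections are trivial fibrations.  A map to a product is
given by its two components; the fibration condition for the induced map to the product is
expressed elementwise. -/
def PairFib {Th : GlobTheory n} {PX X : Mod Th} (e₀ e₁ : PX ⟶ X) : Prop :=
  ∀ (j k : Gle n) (hj : j.val + 1 = k.val) (a : cl PX j) (c₀ c₁ : cl X k),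
    csrc (show j.val < k.val by omega) c₀ = fapp e₀ j a →
    csrc (show j.val < k.val by omega) c₁ = fapp e₁ j a →
    ∃ e : cl PX k, csrc (show j.val < k.val by omega) e = a ∧
      fapp e₀ k e = c₀ ∧ fapp e₁ k e = c₁
/-! ## The semi-model structure package

The content of a cofibrantly generated semi-model structure (Fresse §12.1) with weak
equivalences `W`, generating cofibrations the boundary inclusions and generating trivial
cofibrations the source maps, in which every object is fibrant and globular sums are
contractible. -/

def SemiModelPackage (Th : GlobTheory n) : Prop :=
  -- two-out-of-three for the weak equivalences
  (∀ {X Y Z : Mod Th} (f : X ⟶ Y) (g : Y ⟶ Z), IsWeq f → IsWeq g → IsWeq (f ≫ g)) ∧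
  (∀ {X Y Z : Mod Th} (f : X ⟶ Y) (g : Y ⟶ Z), IsWeq g → IsWeq (f ≫ g) → IsWeq f) ∧
  (∀ {X Y Z : Mod Th} (f : X ⟶ Y) (g : Y ⟶ Z), IsWeq f → IsWeq (f ≫ g) → IsWeq g) ∧
  -- weak equivalences are closed under retracts
  (∀ {X Y W Z : Mod Th} (f : X ⟶ Y) (g : W ⟶ Z), IsRetractOf f g → IsWeq g → IsWeq f) ∧
  -- trivial fibrations are exactly the fibrations which are weak equivalences
  (∀ {X Y : Mod Th} (f : X ⟶ Y), InjI f ↔ InjJ f ∧ IsWeq f) ∧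
  -- (cofibration, trivial fibration) factorizations
  (∀ {X Y : Mod Th} (f : X ⟶ Y),
      ∃ (Z : Mod Th) (i : X ⟶ Z) (p : Z ⟶ Y), IsCofib i ∧ InjI p ∧ i ≫ p = f) ∧
  -- (trivial cofibration, fibration) factorizations for maps with cofibrant domain
  (∀ {X Y : Mod Th} (f : X ⟶ Y), CofObj X →
      ∃ (Z : Mod Th) (i : X ⟶ Z) (p : Z ⟶ Y), IsCofib i ∧ IsWeq i ∧ InjJ p ∧ i ≫ p = f) ∧
  -- trivial cofibrations with cofibrant domain lift against fibrations
  (∀ {X Y : Mod Th} (i : X ⟶ Y), CofObj X → IsCofib i → IsWeq i →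
      ∀ {P Q : Mod Th} (p : P ⟶ Q), InjJ p → SqLift i p) ∧
  -- every object is fibrant
  (∀ X : Mod Th, FibrantObj X) ∧
  -- globular sums are contractible
  (∀ A : Th.E, ContractibleObj (dModA Th A))

/-! ## The boundary of a globular sum

For a table `T` of dimension `m > 0`, the boundary table is obtained by replacing every top
entry equal to `m` by `m - 1`, and collapsing the degenerate stretches so created (runs of
`m`'s separated by `m - 1`'s collapse to a single `m - 1`). -/

def bH (m h : ℕ) : ℕ := min h (m - 1)

def bL (m : ℕ) : List (ℕ × ℕ) → List (ℕ × ℕ)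
  | [] => []
  | (i', j) :: l => if i' = m - 1 then bL m l else (i', bH m j) :: bL m l

def Bnd (m : ℕ) (l : List (ℕ × ℕ)) : Prop := ∀ p ∈ l, p.2 ≤ m

theorem le_maxL : ∀ (l : List (ℕ × ℕ)), ∀ p ∈ l, p.2 ≤ maxL l := by
  intro l
  induction l with
  | nil => intro p hp; simp at hp
  | cons q l ih =>
    intro p hp
    rcases List.mem_cons.mp hp with h | h
    · subst h; simp [maxL]
    · calc p.2 ≤ maxL l := ih p h
        _ ≤ maxL (q :: l) := by simp [maxL]

theorem head_le_dim (T : DimTable n) : T.head ≤ T.dim := le_max_left _ _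

theorem bnd_dim (T : DimTable n) : Bnd T.dim T.rest := fun p hp =>
  le_trans (le_maxL T.rest p hp) (le_max_right _ _)

theorem tv_bdry (m : ℕ) :
    ∀ (h : ℕ) (l : List (ℕ × ℕ)), TV n h l → h ≤ m → Bnd m l → TV n (bH m h) (bL m l) := by
  intro h l
  induction l generalizing h with
  | nil =>
    intro v hh _
    exact le_trans (Nat.cast_le.mpr (min_le_left h (m - 1))) v
  | cons p l ih =>
    obtain ⟨i', j⟩ := p
    intro v hh hb
    by_cases hd : i' = m - 1
    · have hbl : bL m ((i', j) :: l) = bL m l := by simp [bL, hd]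
      have hm : h = m := by have h1 := v.2.1; omega
      have hjm : j = m := by
        have h1 := v.2.2.1
        have h2 := hb (i', j) (List.mem_cons_self ..)
        simp at h2
        omega
      rw [hbl, show bH m h = bH m j by rw [hm, hjm]]
      exact ih j v.2.2.2 (by omega) (fun p hp => hb p (List.mem_cons_of_mem _ hp))
    · have hbl : bL m ((i', j) :: l) = (i', bH m j) :: bL m l := by simp [bL, hd]
      rw [hbl]
      have h1 := v.2.1
      have h2 := v.2.2.1
      have h3 := hb (i', j) (List.mem_cons_self ..)
      simp at h3
      refine ⟨le_trans (Nat.cast_le.mpr (min_le_left h (m - 1))) v.1, ?_, ?_, ?_⟩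
      · simp only [bH]; omega
      · simp only [bH]; omega
      · exact ih j v.2.2.2 (by omega) (fun p hp => hb p (List.mem_cons_of_mem _ hp))

/-- The boundary table of a table. -/
def DimTable.bdry (T : DimTable n) : DimTable n :=
  ⟨bH T.dim T.head, bL T.dim T.rest,
    tv_bdry T.dim T.head T.rest T.valid (head_le_dim T) (bnd_dim T)⟩

section BdryLegs

variable {C : Type*} [Category C] (G : Gle n ⥤ C) (X : C)

/-- Transport of legs along an equality of head dimensions. -/
def legsCast {h h' : ℕ} (e : h = h') {l : List (ℕ × ℕ)} {v : TV n h l} {v' : TV n h' l}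
    (L : Pts (fun g => G.obj g ⟶ X) h' l v') : Pts (fun g => G.obj g ⟶ X) h l v := by
  subst e; exact L

/-- The legs of the cocone exhibiting the source-boundary map `∂_σ : ∂A → A`: on each
component of the boundary, it is given by (capped) cosource maps into the *first* component
of the corresponding run of top-dimensional components of `A`. -/
def srcLegs (m : ℕ) :
    ∀ (h : ℕ) (l : List (ℕ × ℕ)) (v : TV n h l), h ≤ m → Bnd m l →
      ∀ v' : TV n (bH m h) (bL m l),
        Pts (fun g => G.obj g ⟶ X) h l v → Pts (fun g => G.obj g ⟶ X) (bH m h) (bL m l) v' := by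
  intro h l
  induction l generalizing h with
  | nil =>
    intro v hh hb v' f
    exact G.map (sge (a := ⟨bH m h, v'⟩) (b := ⟨h, v⟩) (min_le_left _ _)) ≫ f
  | cons p l ih =>
    obtain ⟨i', j⟩ := p
    intro v hh hb v' fs
    by_cases hd : i' = m - 1
    · have hm : h = m := by have h1 := v.2.1; omega
      have hjm : j = m := by
        have h1 := v.2.2.1
        have h2 := hb (i', j) (List.mem_cons_self ..)
        simp at h2
        omega
      have hbl : bL m ((i', j) :: l) = bL m l := by simp [bL, hd]
      have hhj : bH m h = bH m j := by rw [hm, hjm]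
      revert v'
      rw [hbl, hhj]
      intro v'
      exact Pts.setHead (ih j v.2.2.2 (le_of_eq hjm) (fun p hp => hb p (List.mem_cons_of_mem _ hp)) v' fs.2)
        (G.map (sge (a := ⟨bH m j, TV.headLe v'⟩) (b := ⟨h, v.1⟩)
          (show bH m j ≤ h from hhj ▸ min_le_left h (m - 1))) ≫ fs.1)
    · have hbl : bL m ((i', j) :: l) = (i', bH m j) :: bL m l := by simp [bL, hd]
      have h3 := hb (i', j) (List.mem_cons_self ..)
      simp at h3
      revert v'
      rw [hbl]
      intro v' 
      exact ⟨G.map (sge (a := ⟨bH m h, v'.1⟩) (b := ⟨h, v.1⟩) (min_le_left _ _)) ≫ fs.1,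
        ih j v.2.2.2 (by omega) (fun p hp => hb p (List.mem_cons_of_mem _ hp)) v'.2.2.2 fs.2⟩

/-- The legs of the cocone exhibiting the target-boundary map `∂_τ : ∂A → A`: given by
(capped) cotarget maps into the *last* component of the corresponding run. -/
def tgtLegs (m : ℕ) :
    ∀ (h : ℕ) (l : List (ℕ × ℕ)) (v : TV n h l), h ≤ m → Bnd m l →
      ∀ v' : TV n (bH m h) (bL m l),
        Pts (fun g => G.obj g ⟶ X) h l v → Pts (fun g => G.obj g ⟶ X) (bH m h) (bL m l) v' := by
  intro h l
  induction l generalizing h with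
  | nil =>
    intro v hh hb v' f
    exact G.map (tge (a := ⟨bH m h, v'⟩) (b := ⟨h, v⟩) (min_le_left _ _)) ≫ f
  | cons p l ih =>
    obtain ⟨i', j⟩ := p
    intro v hh hb v' fs
    by_cases hd : i' = m - 1
    · have hm : h = m := by have h1 := v.2.1; omega
      have hjm : j = m := by
        have h1 := v.2.2.1
        have h2 := hb (i', j) (List.mem_cons_self ..)
        simp at h2
        omega
      have hbl : bL m ((i', j) :: l) = bL m l := by simp [bL, hd]
      have hhj : bH m h = bH m j := by rw [hm, hjm]
      revert v'
      rw [hbl, hhj]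
      intro v'
      exact ih j v.2.2.2 (le_of_eq hjm) (fun p hp => hb p (List.mem_cons_of_mem _ hp)) v' fs.2
    · have hbl : bL m ((i', j) :: l) = (i', bH m j) :: bL m l := by simp [bL, hd]
      have h3 := hb (i', j) (List.mem_cons_self ..)
      simp at h3
      revert v'
      rw [hbl]
      intro v'
      exact ⟨G.map (tge (a := ⟨bH m h, v'.1⟩) (b := ⟨h, v.1⟩) (min_le_left _ _)) ≫ fs.1,
        ih j v.2.2.2 (by omega) (fun p hp => hb p (List.mem_cons_of_mem _ hp)) v'.2.2.2 fs.2⟩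

end BdryLegs

/-- The canonical σ-boundary cocone legs (on the boundary table) with values in a globular
sum. -/
def bdrySrcLegs (Th : GlobTheory n) (T : DimTable n) :
    Pts (fun g => Th.G.obj g ⟶ (Th.sum T).pt) T.bdry.head T.bdry.rest T.bdry.valid :=
  srcLegs Th.G (Th.sum T).pt T.dim T.head T.rest T.valid (head_le_dim T) (bnd_dim T)
    T.bdry.valid (Th.sum T).legs

def bdryTgtLegs (Th : GlobTheory n) (T : DimTable n) :
    Pts (fun g => Th.G.obj g ⟶ (Th.sum T).pt) T.bdry.head T.bdry.rest T.bdry.valid :=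
  tgtLegs Th.G (Th.sum T).pt T.dim T.head T.rest T.valid (head_le_dim T) (bnd_dim T)
    T.bdry.valid (Th.sum T).legs

/-- `p` is the boundary map `∂_σ : ∂A → A` induced by the cosource maps `σ`. -/
def IsBdrySrcMap (Th : GlobTheory n) (T : DimTable n)
    (p : (Th.sum T.bdry).pt ⟶ (Th.sum T).pt) : Prop :=
  (Th.sum T.bdry).post p = bdrySrcLegs Th T

/-- `p` is the boundary map `∂_τ : ∂A → A` induced by the cotarget maps `τ`. -/
def IsBdryTgtMap (Th : GlobTheory n) (T : DimTable n)
    (p : (Th.sum T.bdry).pt ⟶ (Th.sum T).pt) : Prop :=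
  (Th.sum T.bdry).post p = bdryTgtLegs Th T
/-! ## Morphisms of globular theories

A morphism of globular theories is a functor commuting strictly with the structural functors
from `Θ₀`, i.e. with the coglobular objects and with the chosen globular sums. -/

structure TheoryHom (A B : GlobTheory n) where
  H : A.E ⥤ B.E
  comm : A.G ⋙ H = B.G
  sum_obj : ∀ T : DimTable n, H.obj (A.sum T).pt = (B.sum T).pt
  sum_legs : ∀ T : DimTable n,
    Pts.mapP (fun _ (f : _ ⟶ (A.sum T).pt) => H.map f) (A.sum T).legs =
    Pts.mapP (fun g (f : B.G.obj g ⟶ (B.sum T).pt) =>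
        eqToHom (Functor.congr_obj comm g) ≫ f ≫ eqToHom (sum_obj T).symm) (B.sum T).legs

def TheoryHom.comp {A B C : GlobTheory n} (φ : TheoryHom A B) (ψ : TheoryHom B C) :
    TheoryHom A C where
  H := φ.H ⋙ ψ.H
  comm := by rw [← Functor.assoc, φ.comm, ψ.comm]
  sum_obj T := by
    show ψ.H.obj (φ.H.obj (A.sum T).pt) = _
    rw [φ.sum_obj T, ψ.sum_obj T]
  sum_legs T := by
    have e1 := congrArg (Pts.mapP (fun _ (f : _ ⟶ φ.H.obj (A.sum T).pt) => ψ.H.map f))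
      (φ.sum_legs T)
    simp only [Pts.mapP_mapP] at e1
    have e2 := congrArg (Pts.mapP (fun g (f : ψ.H.obj (B.G.obj g) ⟶ ψ.H.obj (B.sum T).pt) =>
        eqToHom (show ψ.H.obj (φ.H.obj (A.G.obj g)) = ψ.H.obj (B.G.obj g) from
          congrArg ψ.H.obj (Functor.congr_obj φ.comm g)) ≫ f ≫
        eqToHom (congrArg ψ.H.obj (φ.sum_obj T)).symm)) (ψ.sum_legs T)
    simp only [Pts.mapP_mapP] at e2
    exact e1.trans ((Pts.mapP_ext (fun g a => by simp [eqToHom_map]) _).trans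
      (e2.trans (Pts.mapP_ext (fun g a => by simp) _)))

/-- Θ₀ is, up to isomorphism, the initial globular theory. -/
def IsInitialTheory (A : GlobTheory n) : Prop :=
  ∀ B : GlobTheory n, Nonempty (TheoryHom A B) ∧ ∀ f g : TheoryHom A B, f = g

/-- A pair of operations `f, g : D_k → A` in a theory. -/
structure PairOver (Th : GlobTheory n) where
  k : Gle n
  A : Th.E
  f : Th.G.obj k ⟶ A
  g : Th.G.obj k ⟶ A

/-- The pair is parallel: either `k = 0`, or the two maps agree after precomposition with
the cosource and the cotarget. -/
def PairOver.Parallel {Th : GlobTheory n} (p : PairOver Th) : Prop :=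
  ∀ (j : Gle n) (hj : j.val + 1 = p.k.val),
    Th.G.map (sg (show j.val < p.k.val by omega)) ≫ p.f =
      Th.G.map (sg (show j.val < p.k.val by omega)) ≫ p.g ∧
    Th.G.map (tg (show j.val < p.k.val by omega)) ≫ p.f =
      Th.G.map (tg (show j.val < p.k.val by omega)) ≫ p.g

/-- Transport of a pair along a theory morphism. -/
def TheoryHom.mapPair {A B : GlobTheory n} (φ : TheoryHom A B) (p : PairOver A) :
    PairOver B where
  k := p.k
  A := φ.H.obj p.A
  f := eqToHom (Functor.congr_obj φ.comm p.k).symm ≫ φ.H.map p.f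
  g := eqToHom (Functor.congr_obj φ.comm p.k).symm ≫ φ.H.map p.g

/-- A filler (lift) of a parallel pair. -/
structure Filler {Th : GlobTheory n} (p : PairOver Th) (k' : Gle n)
    (hk' : p.k.val + 1 = k'.val) where
  h : Th.G.obj k' ⟶ p.A
  hs : Th.G.map (sg (show p.k.val < k'.val by omega)) ≫ h = p.f
  ht : Th.G.map (tg (show p.k.val < k'.val by omega)) ≫ h = p.g

/-- `φ : A → A'` exhibits `A'` as the theory obtained from `A` by freely adjoining fillers
for the pairs in `X` (of non-maximal dimension) and equalizing the pairs of `X` of top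
dimension (Prop. "universal property of globular theories"). -/
def IsFreeExt {A A' : GlobTheory n} (φ : TheoryHom A A') (X : Set (PairOver A)) : Prop :=
  (∀ p ∈ X, ¬ inR n (p.k.val + 1) → (φ.mapPair p).f = (φ.mapPair p).g) ∧
  ∃ hat : ∀ p ∈ X, ∀ (k' : Gle n) (hk' : p.k.val + 1 = k'.val), Filler (φ.mapPair p) k' hk',
    ∀ (D : GlobTheory n) (F₀ : TheoryHom A D),
      (∀ p ∈ X, ¬ inR n (p.k.val + 1) → (F₀.mapPair p).f = (F₀.mapPair p).g) →
      ∀ ch : ∀ p ∈ X, ∀ (k' : Gle n) (hk' : p.k.val + 1 = k'.val), Filler (F₀.mapPair p) k' hk',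
        ∃! H : TheoryHom A' D, φ.comp H = F₀ ∧
          ∀ (p : PairOver A) (hp : p ∈ X) (k' : Gle n) (hk' : p.k.val + 1 = k'.val),
            HEq (H.H.map (hat p hp k' hk').h) ((ch p hp k' hk').h)

/-- `Th` is the colimit of the tower `Tw` in the category of globular theories. -/
def IsTowerColimit (Tw : ℕ → GlobTheory n) (st : ∀ m, TheoryHom (Tw m) (Tw (m + 1)))
    (Th : GlobTheory n) : Prop :=
  ∃ coc : ∀ m, TheoryHom (Tw m) Th,
    (∀ m, (st m).comp (coc (m + 1)) = coc m) ∧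
    ∀ (B : GlobTheory n) (d : ∀ m, TheoryHom (Tw m) B),
      (∀ m, (st m).comp (d (m + 1)) = d m) →
      ∃! K : TheoryHom Th B, ∀ m, (coc m).comp K = d m

/-- Cellularity of a globular theory with respect to a notion of admissible pairs:
`Th` is the colimit of a tower starting at `Θ₀` in which each stage is freely generated
over the previous one by fillers for a family of admissible pairs. -/
def CellularTheory (adm : ∀ Th' : GlobTheory n, PairOver Th' → Prop)
    (Th : GlobTheory n) : Prop :=
  ∃ (Tw : ℕ → GlobTheory n) (st : ∀ m, TheoryHom (Tw m) (Tw (m + 1))),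
    IsInitialTheory (Tw 0) ∧
    (∀ m, ∃ X : Set (PairOver (Tw m)),
        (∀ p ∈ X, p.Parallel ∧ adm (Tw m) p) ∧ IsFreeExt (st m) X) ∧
    IsTowerColimit Tw st Th

/-- Contractibility of a globular theory with respect to a notion of admissible pairs:
every admissible parallel pair of non-maximal dimension has a filler, and admissible
parallel pairs of maximal dimension are equal. -/
def ContractibleTheory (adm : ∀ Th' : GlobTheory n, PairOver Th' → Prop)
    (Th : GlobTheory n) : Prop :=
  ∀ p : PairOver Th, p.Parallel → adm Th p →
    (∀ (k' : Gle n) (hk' : p.k.val + 1 = k'.val), Nonempty (Filler p k' hk')) ∧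
    (¬ inR n (p.k.val + 1) → p.f = p.g)

/-- `dim A ≤ d`, expressed via the (unique) table presenting `A`. -/
def DimLeObj (Th : GlobTheory n) (A : Th.E) (d : ℕ) : Prop :=
  ∀ T : DimTable n, (Th.sum T).pt = A → T.dim ≤ d

/-- Admissible pairs in the groupoidal sense: `dim A ≤ k + 1`. -/
def AdmGpd (Th : GlobTheory n) (p : PairOver Th) : Prop :=
  DimLeObj Th p.A (p.k.val + 1)

/-- A coherator for `n`-groupoids: a contractible and cellular `n`-globular theory (with
respect to groupoid-admissible pairs). -/
def IsGpdCoherator (Th : GlobTheory n) : Prop :=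
  ContractibleTheory AdmGpd Th ∧ CellularTheory AdmGpd Th
/-! ## Homogeneous maps and coherators for `n`-categories -/

/-- The globular maps of a theory: the image of `Θ₀`, i.e. the smallest class of maps
containing the identities, the coglobular maps and the cocone inclusions of the globular
sums, and closed under composition and under the induction of maps out of globular sums. -/
inductive IsGlobularMap (Th : GlobTheory n) : ∀ {A B : Th.E}, (A ⟶ B) → Prop where
  | id (A : Th.E) : IsGlobularMap Th (𝟙 A)
  | comp {A B C : Th.E} {f : A ⟶ B} {g : B ⟶ C} :
      IsGlobularMap Th f → IsGlobularMap Th g → IsGlobularMap Th (f ≫ g)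
  | coglob {a b : Gle n} (f : a ⟶ b) : IsGlobularMap Th (Th.G.map f)
  | leg (T : DimTable n) (q : Σ g : Gle n, Th.G.obj g ⟶ (Th.sum T).pt)
      (hq : q ∈ Pts.toSet (Th.sum T).legs) : IsGlobularMap Th q.2
  | induced (T : DimTable n) {B : Th.E}
      (fs : Pts (fun g => Th.G.obj g ⟶ B) T.head T.rest T.valid)
      (hok : PtsOk (fun a b hab f => Th.G.map (sg hab) ≫ f)
        (fun a b hab f => Th.G.map (tg hab) ≫ f) fs)
      (hg : ∀ q ∈ Pts.toSet fs, IsGlobularMap Th q.2)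
      (f : (Th.sum T).pt ⟶ B) (hf : (Th.sum T).post f = fs) :
      IsGlobularMap Th f

/-- `f` is homogeneous: in every factorization `f = f' ≫ g` with `g` globular, `g` is an
identity. -/
def IsHomog (Th : GlobTheory n) {A B : Th.E} (f : A ⟶ B) : Prop :=
  ∀ {M : Th.E} (f' : A ⟶ M) (g : M ⟶ B), f = f' ≫ g → IsGlobularMap Th g →
    ∃ e : M = B, g = eqToHom e

/-- Admissible pairs for a theory of `n`-categories: `k = 0`, or both maps homogeneous, or
both factor through homogeneous maps into the boundary `∂A` along `∂_σ` resp. `∂_τ`. -/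
def AdmCat (Th : GlobTheory n) (p : PairOver Th) : Prop :=
  p.k.val = 0 ∨ (IsHomog Th p.f ∧ IsHomog Th p.g) ∨
  ∃ (T : DimTable n) (hA : (Th.sum T).pt = p.A), 0 < T.dim ∧
    ∃ (pσ pτ : (Th.sum T.bdry).pt ⟶ (Th.sum T).pt),
      IsBdrySrcMap Th T pσ ∧ IsBdryTgtMap Th T pτ ∧
      ∃ (f' g' : Th.G.obj p.k ⟶ (Th.sum T.bdry).pt),
        IsHomog Th f' ∧ IsHomog Th g' ∧
        p.f = f' ≫ pσ ≫ eqToHom hA ∧ p.g = g' ≫ pτ ≫ eqToHom hA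

/-- Contractibility with *unique* fillers (with respect to categorically admissible pairs);
this characterizes the theory `Θ` of strict higher categories among globular theories. -/
def IsStrictThetaCat (Th : GlobTheory n) : Prop :=
  (∀ p : PairOver Th, p.Parallel → AdmCat Th p →
    (∀ (k' : Gle n) (hk' : p.k.val + 1 = k'.val),
        ∃! h : Th.G.obj k' ⟶ p.A,
          Th.G.map (sg (show p.k.val < k'.val by omega)) ≫ h = p.f ∧
          Th.G.map (tg (show p.k.val < k'.val by omega)) ≫ h = p.g) ∧
    (¬ inR n (p.k.val + 1) → p.f = p.g)) ∧
  CellularTheory AdmCat Th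

/-- The theory is homogeneous: it is equipped with a globular-sums preserving functor to the
theory of strict `n`-categories which detects homogeneous maps. -/
def HomogeneousStr (Th : GlobTheory n) : Prop :=
  ∃ (Θ' : GlobTheory n) (Hm : TheoryHom Th Θ'), IsStrictThetaCat Θ' ∧
    ∀ {A B : Th.E} (f : A ⟶ B), IsHomog Th f ↔ IsHomog Θ' (Hm.H.map f)

/-- A coherator for `n`-categories: a contractible, cellular, homogeneous `n`-globular
theory with respect to categorically admissible pairs. -/
def IsCatCoherator (Th : GlobTheory n) : Prop :=
  HomogeneousStr Th ∧ ContractibleTheory AdmCat Th ∧ CellularTheory AdmCat Th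

/-! ## `m`-bijective and `m`-fully faithful maps of models -/

/-- A morphism of models is `m`-bijective if it is bijective on `k`-cells for all `k ≤ m`. -/
def MBijMod {Th : GlobTheory n} (m : ℕ) {X Y : Mod Th} (f : X ⟶ Y) : Prop :=
  ∀ g : Gle n, g.val ≤ m → Function.Bijective (fapp f g)

/-- A morphism of models is `m`-fully faithful if for all `i ≥ m` the square of
`(i+1)`-cells over pairs of parallel `i`-cells is cartesian (elementwise formulation). -/
def MFFMod {Th : GlobTheory n} (m : ℕ) {X Y : Mod Th} (f : X ⟶ Y) : Prop :=
  ∀ (j k : Gle n) (hj : j.val + 1 = k.val), m ≤ j.val →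
    ∀ (y : cl Y k) (xs xt : cl X j),
      fapp f j xs = csrc (show j.val < k.val by omega) y →
      fapp f j xt = ctgt (show j.val < k.val by omega) y →
      ∃! x : cl X k, fapp f k x = y ∧ csrc (show j.val < k.val by omega) x = xs ∧
        ctgt (show j.val < k.val by omega) x = xt

/-! ## Systems of compositions, identities and inverses -/

/-- The table presenting the globular sum `D_k ⨿_{D_{k-1}} D_k`. -/
def pairTab (k : ℕ) (h1 : 1 ≤ k) (hk : inR n k) : DimTable n :=
  ⟨k, [(k - 1, k)], ⟨hk, by omega, by omega, hk⟩⟩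

/-- The globular sum `D_k ⨿_{D_{k-1}} D_k` in a theory. -/
def cPt (Th : GlobTheory n) (k : ℕ) (h1 : 1 ≤ k) (hk : inR n k) : Th.E :=
  (Th.sum (pairTab k h1 hk)).pt

/-- The cocone inclusion whose cosource face is glued. -/
def cInclS (Th : GlobTheory n) (k : ℕ) (h1 : 1 ≤ k) (hk : inR n k) :
    Th.D k hk ⟶ cPt Th k h1 hk :=
  (Th.sum (pairTab k h1 hk)).legs.1

/-- The cocone inclusion whose cotarget face is glued. -/
def cInclT (Th : GlobTheory n) (k : ℕ) (h1 : 1 ≤ k) (hk : inR n k) :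
    Th.D k hk ⟶ cPt Th k h1 hk :=
  (Th.sum (pairTab k h1 hk)).legs.2

/-- A system of compositions and a system of identities (with unit constraints) on a
globular theory; for finite `n` the unit constraints in dimension `n + 1` are equations. -/
structure SysCI (Th : GlobTheory n) where
  /-- binary compositions `c_k : D_k → D_k ⨿_{D_{k-1}} D_k`, `1 ≤ k ≤ n` -/
  c : ∀ (k : ℕ) (h1 : 1 ≤ k) (hk : inR n k), Th.D k hk ⟶ cPt Th k h1 hk
  c_s : ∀ (k : ℕ) (h1 : 1 ≤ k) (hk : inR n k) (j : ℕ) (hj : j + 1 = k) (hjn : inR n j),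
    Th.G.map (sg (a := ⟨j, hjn⟩) (b := ⟨k, hk⟩) (show j < k by omega)) ≫ c k h1 hk =
      Th.G.map (sg (a := ⟨j, hjn⟩) (b := ⟨k, hk⟩) (show j < k by omega)) ≫ cInclT Th k h1 hk
  c_t : ∀ (k : ℕ) (h1 : 1 ≤ k) (hk : inR n k) (j : ℕ) (hj : j + 1 = k) (hjn : inR n j),
    Th.G.map (tg (a := ⟨j, hjn⟩) (b := ⟨k, hk⟩) (show j < k by omega)) ≫ c k h1 hk =
      Th.G.map (tg (a := ⟨j, hjn⟩) (b := ⟨k, hk⟩) (show j < k by omega)) ≫ cInclS Th k h1 hk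
  /-- identities `id_k : D_{k+1} → D_k`, `0 ≤ k ≤ n - 1` -/
  idm : ∀ (k k' : ℕ) (hk' : k + 1 = k') (hn : inR n k') (hkn : inR n k),
    Th.D k' hn ⟶ Th.D k hkn
  idm_s : ∀ (k k' : ℕ) (hk' : k + 1 = k') (hn : inR n k') (hkn : inR n k),
    Th.G.map (sg (a := ⟨k, hkn⟩) (b := ⟨k', hn⟩) (show k < k' by omega)) ≫ idm k k' hk' hn hkn = 𝟙 _
  idm_t : ∀ (k k' : ℕ) (hk' : k + 1 = k') (hn : inR n k') (hkn : inR n k),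
    Th.G.map (tg (a := ⟨k, hkn⟩) (b := ⟨k', hn⟩) (show k < k' by omega)) ≫ idm k k' hk' hn hkn = 𝟙 _
  /-- left unit constraints `l_k : D_k → D_{k-1}`, `2 ≤ k ≤ n` -/
  lu : ∀ (i j k : ℕ) (hi : i + 1 = j) (hj : j + 1 = k) (hk : inR n k) (hjn : inR n j),
    Th.D k hk ⟶ Th.D j hjn
  lu_s : ∀ (i j k : ℕ) (hi : i + 1 = j) (hj : j + 1 = k) (hk : inR n k) (hjn : inR n j),
    Th.G.map (sg (a := ⟨j, hjn⟩) (b := ⟨k, hk⟩) (show j < k by omega)) ≫ lu i j k hi hj hk hjn = 𝟙 _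
  lu_t : ∀ (i j k : ℕ) (hi : i + 1 = j) (hj : j + 1 = k) (hk : inR n k) (hjn : inR n j)
      (hin : inR n i) (h1 : 1 ≤ j),
    ∃ u : cPt Th j h1 hjn ⟶ Th.D j hjn,
      cInclS Th j h1 hjn ≫ u =
        idm i j hi hjn hin ≫ Th.G.map (tg (a := ⟨i, hin⟩) (b := ⟨j, hjn⟩) (show i < j by omega)) ∧
      cInclT Th j h1 hjn ≫ u = 𝟙 _ ∧
      Th.G.map (tg (a := ⟨j, hjn⟩) (b := ⟨k, hk⟩) (show j < k by omega)) ≫ lu i j k hi hj hk hjn =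
        c j h1 hjn ≫ u
  /-- right unit constraints `r_k : D_k → D_{k-1}`, `2 ≤ k ≤ n` -/
  ru : ∀ (i j k : ℕ) (hi : i + 1 = j) (hj : j + 1 = k) (hk : inR n k) (hjn : inR n j),
    Th.D k hk ⟶ Th.D j hjn
  ru_s : ∀ (i j k : ℕ) (hi : i + 1 = j) (hj : j + 1 = k) (hk : inR n k) (hjn : inR n j),
    Th.G.map (sg (a := ⟨j, hjn⟩) (b := ⟨k, hk⟩) (show j < k by omega)) ≫ ru i j k hi hj hk hjn = 𝟙 _
  ru_t : ∀ (i j k : ℕ) (hi : i + 1 = j) (hj : j + 1 = k) (hk : inR n k) (hjn : inR n j)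
      (hin : inR n i) (h1 : 1 ≤ j),
    ∃ u : cPt Th j h1 hjn ⟶ Th.D j hjn,
      cInclS Th j h1 hjn ≫ u = 𝟙 _ ∧
      cInclT Th j h1 hjn ≫ u =
        idm i j hi hjn hin ≫ Th.G.map (sg (a := ⟨i, hin⟩) (b := ⟨j, hjn⟩) (show i < j by omega)) ∧
      Th.G.map (tg (a := ⟨j, hjn⟩) (b := ⟨k, hk⟩) (show j < k by omega)) ≫ ru i j k hi hj hk hjn =
        c j h1 hjn ≫ u
  /-- the unit constraints in dimension `n + 1` (for finite `n`) become equations -/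
  lu_top : ∀ (i j : ℕ) (hi : i + 1 = j) (hjn : inR n j) (hin : inR n i) (h1 : 1 ≤ j),
    ¬ inR n (j + 1) →
    ∃ u : cPt Th j h1 hjn ⟶ Th.D j hjn,
      cInclS Th j h1 hjn ≫ u =
        idm i j hi hjn hin ≫ Th.G.map (tg (a := ⟨i, hin⟩) (b := ⟨j, hjn⟩) (show i < j by omega)) ∧
      cInclT Th j h1 hjn ≫ u = 𝟙 _ ∧
      𝟙 (Th.D j hjn) = c j h1 hjn ≫ u
  ru_top : ∀ (i j : ℕ) (hi : i + 1 = j) (hjn : inR n j) (hin : inR n i) (h1 : 1 ≤ j),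
    ¬ inR n (j + 1) →
    ∃ u : cPt Th j h1 hjn ⟶ Th.D j hjn,
      cInclS Th j h1 hjn ≫ u = 𝟙 _ ∧
      cInclT Th j h1 hjn ≫ u =
        idm i j hi hjn hin ≫ Th.G.map (sg (a := ⟨i, hin⟩) (b := ⟨j, hjn⟩) (show i < j by omega)) ∧
      𝟙 (Th.D j hjn) = c j h1 hjn ≫ u

/-- A system of left and right inverses relative to chosen systems of compositions and
identities. -/
structure SysInv (Th : GlobTheory n) (s : SysCI Th) where
  /-- left and right inverse operations `i^l_k, i^r_k : D_k → D_k`, exchanging source and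
  target -/
  il : ∀ (k : ℕ) (h1 : 1 ≤ k) (hk : inR n k), Th.D k hk ⟶ Th.D k hk
  ir : ∀ (k : ℕ) (h1 : 1 ≤ k) (hk : inR n k), Th.D k hk ⟶ Th.D k hk
  il_s : ∀ (k : ℕ) (h1 : 1 ≤ k) (hk : inR n k) (j : ℕ) (hj : j + 1 = k) (hjn : inR n j),
    Th.G.map (sg (a := ⟨j, hjn⟩) (b := ⟨k, hk⟩) (show j < k by omega)) ≫ il k h1 hk =
      Th.G.map (tg (a := ⟨j, hjn⟩) (b := ⟨k, hk⟩) (show j < k by omega))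
  il_t : ∀ (k : ℕ) (h1 : 1 ≤ k) (hk : inR n k) (j : ℕ) (hj : j + 1 = k) (hjn : inR n j),
    Th.G.map (tg (a := ⟨j, hjn⟩) (b := ⟨k, hk⟩) (show j < k by omega)) ≫ il k h1 hk =
      Th.G.map (sg (a := ⟨j, hjn⟩) (b := ⟨k, hk⟩) (show j < k by omega))
  ir_s : ∀ (k : ℕ) (h1 : 1 ≤ k) (hk : inR n k) (j : ℕ) (hj : j + 1 = k) (hjn : inR n j),
    Th.G.map (sg (a := ⟨j, hjn⟩) (b := ⟨k, hk⟩) (show j < k by omega)) ≫ ir k h1 hk =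
      Th.G.map (tg (a := ⟨j, hjn⟩) (b := ⟨k, hk⟩) (show j < k by omega))
  ir_t : ∀ (k : ℕ) (h1 : 1 ≤ k) (hk : inR n k) (j : ℕ) (hj : j + 1 = k) (hjn : inR n j),
    Th.G.map (tg (a := ⟨j, hjn⟩) (b := ⟨k, hk⟩) (show j < k by omega)) ≫ ir k h1 hk =
      Th.G.map (sg (a := ⟨j, hjn⟩) (b := ⟨k, hk⟩) (show j < k by omega))
  /-- the witnesses `k^l_k, k^r_k : D_k → D_{k-1}`, `2 ≤ k ≤ n`, relating the composite of a
  cell with its left (resp. right) inverse to an identity cell -/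
  kl : ∀ (i j k : ℕ) (hi : i + 1 = j) (hj : j + 1 = k) (hk : inR n k) (hjn : inR n j),
    Th.D k hk ⟶ Th.D j hjn
  kl_s : ∀ (i j k : ℕ) (hi : i + 1 = j) (hj : j + 1 = k) (hk : inR n k) (hjn : inR n j)
      (hin : inR n i),
    Th.G.map (sg (a := ⟨j, hjn⟩) (b := ⟨k, hk⟩) (show j < k by omega)) ≫ kl i j k hi hj hk hjn =
      s.idm i j hi hjn hin ≫ Th.G.map (sg (a := ⟨i, hin⟩) (b := ⟨j, hjn⟩) (show i < j by omega))
  kl_t : ∀ (i j k : ℕ) (hi : i + 1 = j) (hj : j + 1 = k) (hk : inR n k) (hjn : inR n j)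
      (h1 : 1 ≤ j),
    ∃ u : cPt Th j h1 hjn ⟶ Th.D j hjn,
      cInclS Th j h1 hjn ≫ u = il j h1 hjn ∧
      cInclT Th j h1 hjn ≫ u = 𝟙 _ ∧
      Th.G.map (tg (a := ⟨j, hjn⟩) (b := ⟨k, hk⟩) (show j < k by omega)) ≫ kl i j k hi hj hk hjn =
        s.c j h1 hjn ≫ u
  kr : ∀ (i j k : ℕ) (hi : i + 1 = j) (hj : j + 1 = k) (hk : inR n k) (hjn : inR n j),
    Th.D k hk ⟶ Th.D j hjn
  kr_s : ∀ (i j k : ℕ) (hi : i + 1 = j) (hj : j + 1 = k) (hk : inR n k) (hjn : inR n j)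
      (hin : inR n i),
    Th.G.map (sg (a := ⟨j, hjn⟩) (b := ⟨k, hk⟩) (show j < k by omega)) ≫ kr i j k hi hj hk hjn =
      s.idm i j hi hjn hin ≫ Th.G.map (tg (a := ⟨i, hin⟩) (b := ⟨j, hjn⟩) (show i < j by omega))
  kr_t : ∀ (i j k : ℕ) (hi : i + 1 = j) (hj : j + 1 = k) (hk : inR n k) (hjn : inR n j)
      (h1 : 1 ≤ j),
    ∃ u : cPt Th j h1 hjn ⟶ Th.D j hjn,
      cInclS Th j h1 hjn ≫ u = 𝟙 _ ∧
      cInclT Th j h1 hjn ≫ u = ir j h1 hjn ∧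
      Th.G.map (tg (a := ⟨j, hjn⟩) (b := ⟨k, hk⟩) (show j < k by omega)) ≫ kr i j k hi hj hk hjn =
        s.c j h1 hjn ≫ u
  /-- the witnesses in dimension `n + 1` (for finite `n`) become equations -/
  kl_top : ∀ (i j : ℕ) (hi : i + 1 = j) (hjn : inR n j) (hin : inR n i) (h1 : 1 ≤ j),
    ¬ inR n (j + 1) →
    ∃ u : cPt Th j h1 hjn ⟶ Th.D j hjn,
      cInclS Th j h1 hjn ≫ u = il j h1 hjn ∧
      cInclT Th j h1 hjn ≫ u = 𝟙 _ ∧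
      s.idm i j hi hjn hin ≫ Th.G.map (sg (a := ⟨i, hin⟩) (b := ⟨j, hjn⟩) (show i < j by omega)) =
        s.c j h1 hjn ≫ u
  kr_top : ∀ (i j : ℕ) (hi : i + 1 = j) (hjn : inR n j) (hin : inR n i) (h1 : 1 ≤ j),
    ¬ inR n (j + 1) →
    ∃ u : cPt Th j h1 hjn ⟶ Th.D j hjn,
      cInclS Th j h1 hjn ≫ u = 𝟙 _ ∧
      cInclT Th j h1 hjn ≫ u = ir j h1 hjn ∧
      s.idm i j hi hjn hin ≫ Th.G.map (tg (a := ⟨i, hin⟩) (b := ⟨j, hjn⟩) (show i < j by omega)) =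
        s.c j h1 hjn ≫ u

/-- A theory morphism maps a chosen system of compositions and identities to another. -/
def MapsSysCI {A B : GlobTheory n} (φ : TheoryHom A B) (sA : SysCI A) (sB : SysCI B) :
    Prop :=
  (∀ (k : ℕ) (h1 : 1 ≤ k) (hk : inR n k),
    φ.H.map (sA.c k h1 hk) =
      eqToHom (Functor.congr_obj φ.comm ⟨k, hk⟩) ≫ sB.c k h1 hk ≫
        eqToHom (φ.sum_obj (pairTab k h1 hk)).symm) ∧
  (∀ (k k' : ℕ) (hk' : k + 1 = k') (hn : inR n k') (hkn : inR n k),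
    φ.H.map (sA.idm k k' hk' hn hkn) =
      eqToHom (Functor.congr_obj φ.comm ⟨k', hn⟩) ≫ sB.idm k k' hk' hn hkn ≫
        eqToHom (Functor.congr_obj φ.comm ⟨k, hkn⟩).symm) ∧
  (∀ (i j k : ℕ) (hi : i + 1 = j) (hj : j + 1 = k) (hk : inR n k) (hjn : inR n j),
    φ.H.map (sA.lu i j k hi hj hk hjn) =
      eqToHom (Functor.congr_obj φ.comm ⟨k, hk⟩) ≫ sB.lu i j k hi hj hk hjn ≫
        eqToHom (Functor.congr_obj φ.comm ⟨j, hjn⟩).symm) ∧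
  (∀ (i j k : ℕ) (hi : i + 1 = j) (hj : j + 1 = k) (hk : inR n k) (hjn : inR n j),
    φ.H.map (sA.ru i j k hi hj hk hjn) =
      eqToHom (Functor.congr_obj φ.comm ⟨k, hk⟩) ≫ sB.ru i j k hi hj hk hjn ≫
        eqToHom (Functor.congr_obj φ.comm ⟨j, hjn⟩).symm)

/-- A theory morphism maps a chosen system of inverses to another. -/
def MapsSysInv {A B : GlobTheory n} (φ : TheoryHom A B) {sA : SysCI A} {sB : SysCI B}
    (iA : SysInv A sA) (iB : SysInv B sB) : Prop :=
  (∀ (k : ℕ) (h1 : 1 ≤ k) (hk : inR n k),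
    φ.H.map (iA.il k h1 hk) =
      eqToHom (Functor.congr_obj φ.comm ⟨k, hk⟩) ≫ iB.il k h1 hk ≫
        eqToHom (Functor.congr_obj φ.comm ⟨k, hk⟩).symm) ∧
  (∀ (k : ℕ) (h1 : 1 ≤ k) (hk : inR n k),
    φ.H.map (iA.ir k h1 hk) =
      eqToHom (Functor.congr_obj φ.comm ⟨k, hk⟩) ≫ iB.ir k h1 hk ≫
        eqToHom (Functor.congr_obj φ.comm ⟨k, hk⟩).symm) ∧
  (∀ (i j k : ℕ) (hi : i + 1 = j) (hj : j + 1 = k) (hk : inR n k) (hjn : inR n j),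
    φ.H.map (iA.kl i j k hi hj hk hjn) =
      eqToHom (Functor.congr_obj φ.comm ⟨k, hk⟩) ≫ iB.kl i j k hi hj hk hjn ≫
        eqToHom (Functor.congr_obj φ.comm ⟨j, hjn⟩).symm) ∧
  (∀ (i j k : ℕ) (hi : i + 1 = j) (hj : j + 1 = k) (hk : inR n k) (hjn : inR n j),
    φ.H.map (iA.kr i j k hi hj hk hjn) =
      eqToHom (Functor.congr_obj φ.comm ⟨k, hk⟩) ≫ iB.kr i j k hi hj hk hjn ≫
        eqToHom (Functor.congr_obj φ.comm ⟨j, hjn⟩).symm)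

/-- `ι : C → CW`, together with a transported system of compositions/identities `sW` and a
system of inverses `iW`, exhibits `CW` as the theory `C^W`: the pushout of `C` and the free
theory on a system of compositions, identities, and left and right inverses, along the free
theory on a system of compositions and identities.  By the universal properties of the free
theories, this pushout is characterized by: morphisms `CW → D` correspond bijectively to
morphisms `C → D` together with a system of inverses on `D` relative to the transported
compositions and identities. -/
def IsWClosure {Cth CW : GlobTheory n} (ι : TheoryHom Cth CW) (sC : SysCI Cth)
    (sW : SysCI CW) (iW : SysInv CW sW) : Prop :=
  MapsSysCI ι sC sW ∧
  ∀ (D : GlobTheory n) (H : TheoryHom Cth D) (sD : SysCI D) (iD : SysInv D sD),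
    MapsSysCI H sC sD →
    ∃! K : TheoryHom CW D, ι.comp K = H ∧ MapsSysCI K sW sD ∧ MapsSysInv K iW iD
/-! ## Composition and identity of cells in a model; the models `𝕀_k` -/

/-- The codimension-1 boundary globe of a globe. -/
def mid1 (j : Gle n) (h1 : 1 ≤ j.val) : Gle n :=
  ⟨j.val - 1, le_trans (Nat.cast_le.mpr (Nat.sub_le _ _)) j.isLe⟩

/-- Binary composition of cells of a model, using a chosen system of compositions. -/
noncomputable def pairCell {Th : GlobTheory n} (s : SysCI Th) (X : Mod Th)
    {j : Gle n} (h1 : 1 ≤ j.val) (a b : cl X j)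
    (hab : csrc (a := mid1 j h1) (b := j) (show j.val - 1 < j.val by omega) a =
      ctgt (a := mid1 j h1) (b := j) (show j.val - 1 < j.val by omega) b) : cl X j :=
  X.obj.map (op (s.c j.val h1 j.isLe))
    ((X.property (pairTab j.val h1 j.isLe) (a, b) ⟨hab, trivial⟩).choose)

/-- The identity cell on a cell of codimension 1, via a chosen system of identities. -/
def idCell1 {Th : GlobTheory n} (s : SysCI Th) (X : Mod Th) {j : Gle n} (h1 : 1 ≤ j.val)
    (x : cl X (mid1 j h1)) : cl X j :=
  X.obj.map (op (s.idm (j.val - 1) j.val (by omega) j.isLe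
    (le_trans (Nat.cast_le.mpr (Nat.sub_le _ _)) j.isLe))) x

/-- The generating data of the model `𝕀_j`: a `j`-cell `f`, two `j`-cells `g, k` in the
opposite direction, and two `(j+1)`-cells relating (via the chosen compositions and
identities) the composite of `f` with `g`, and of `k` with `f`, to identity cells. -/
structure InvWitness {Th : GlobTheory n} (s : SysCI Th) (X : Mod Th) (j k : Gle n)
    (h1 : 1 ≤ j.val) (hjk : j.val + 1 = k.val) where
  f : cl X j
  g : cl X j
  kk : cl X j
  e1 : csrc (a := mid1 j h1) (show j.val - 1 < j.val by omega) g =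
    ctgt (a := mid1 j h1) (show j.val - 1 < j.val by omega) f
  e2 : ctgt (a := mid1 j h1) (show j.val - 1 < j.val by omega) g =
    csrc (a := mid1 j h1) (show j.val - 1 < j.val by omega) f
  e3 : csrc (a := mid1 j h1) (show j.val - 1 < j.val by omega) kk =
    ctgt (a := mid1 j h1) (show j.val - 1 < j.val by omega) f
  e4 : ctgt (a := mid1 j h1) (show j.val - 1 < j.val by omega) kk =
    csrc (a := mid1 j h1) (show j.val - 1 < j.val by omega) f
  H₁ : cl X k
  H₂ : cl X k
  h1s : csrc (show j.val < k.val by omega) H₁ = pairCell s X h1 f g e2.symm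
  h1t : ctgt (show j.val < k.val by omega) H₁ =
    idCell1 s X h1 (csrc (a := mid1 j h1) (show j.val - 1 < j.val by omega) g)
  h2s : csrc (show j.val < k.val by omega) H₂ = pairCell s X h1 kk f e3
  h2t : ctgt (show j.val < k.val by omega) H₂ =
    idCell1 s X h1 (csrc (a := mid1 j h1) (show j.val - 1 < j.val by omega) f)

/-- `I` (with its witness `w`) is the model `𝕀_j` freely generated by the data of an
`InvWitness`. -/
def IsFreeInv {Th : GlobTheory n} (s : SysCI Th) (I : Mod Th) {j k : Gle n}
    {h1 : 1 ≤ j.val} {hjk : j.val + 1 = k.val} (w : InvWitness s I j k h1 hjk) : Prop :=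
  ∀ (Y : Mod Th) (w' : InvWitness s Y j k h1 hjk),
    ∃! φ : I ⟶ Y, fapp φ j w.f = w'.f ∧ fapp φ j w.g = w'.g ∧ fapp φ j w.kk = w'.kk ∧
      fapp φ k w.H₁ = w'.H₁ ∧ fapp φ k w.H₂ = w'.H₂

/-- The map `α_j : D_j → 𝕀_j` selecting the generating cell `f`. -/
noncomputable def invIncl {Th : GlobTheory n} (s : SysCI Th) {I : Mod Th} {j k : Gle n}
    {h1 : 1 ≤ j.val} {hjk : j.val + 1 = k.val} (w : InvWitness s I j k h1 hjk) :
    dMod Th j ⟶ I :=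
  ⟨yonedaEquiv.symm w.f⟩

/-- The index family for the generating maps `α_k : D_k → 𝕀_k` (`k ≥ 1`). -/
structure AlphaIdx (Th : GlobTheory n) (s : SysCI Th) where
  j : Gle n
  k : Gle n
  h1 : 1 ≤ j.val
  hjk : j.val + 1 = k.val
  I : Mod Th
  w : InvWitness s I j k h1 hjk
  free : IsFreeInv s I w

/-- The family `α_k : D_k → 𝕀_k`. -/
noncomputable def alphaGen (Th : GlobTheory n) (s : SysCI Th) (x : AlphaIdx Th s) :
    dMod Th x.j ⟶ x.I :=
  invIncl s x.w

/-! ## Transfinite composites of pushouts of a family of maps -/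

theorem ord_lt_succ (o : Ordinal) : o < o + 1 := by
  rw [Ordinal.add_one_eq_succ]
  exact Order.lt_succ o

universe u_4

/-- A presentation of `f : X ⟶ Y` as a transfinite composite of pushouts of the maps of the
family `gen`. -/
structure CellPres {M : Type*} [Category M] {ι : Type*} {Ai Bi : ι → M}
    (gen : ∀ i : ι, Ai i ⟶ Bi i) {X Y : M} (f : X ⟶ Y) where
  len : Ordinal.{u_4}
  F : ∀ o : Ordinal, o ≤ len → M
  mp : ∀ (o o' : Ordinal) (ho : o ≤ o') (h' : o' ≤ len), F o (ho.trans h') ⟶ F o' h'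
  mp_id : ∀ (o : Ordinal) (h : o ≤ len), mp o o le_rfl h = 𝟙 _
  mp_comp : ∀ (o₁ o₂ o₃ : Ordinal) (h12 : o₁ ≤ o₂) (h23 : o₂ ≤ o₃) (h3 : o₃ ≤ len),
    mp o₁ o₃ (h12.trans h23) h3 = mp o₁ o₂ h12 (h23.trans h3) ≫ mp o₂ o₃ h23 h3
  bot : F 0 (zero_le ..) = X
  /-- each successor step is a pushout of one of the generating maps -/
  succ : ∀ (o : Ordinal) (h : o + 1 ≤ len),
    ∃ (i : ι) (u : Ai i ⟶ F o ((ord_lt_succ o).le.trans h)) (v : Bi i ⟶ F (o + 1) h),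
      IsPushout (gen i) u v (mp o (o + 1) (ord_lt_succ o).le h)
  /-- at limit stages the chain is colimiting -/
  limit : ∀ (o : Ordinal) (ho : o ≤ len), Order.IsSuccLimit o →
    ∀ (Z : M) (legs : ∀ (o' : Ordinal) (h' : o' < o), F o' (h'.le.trans ho) ⟶ Z),
      (∀ (o₁ o₂ : Ordinal) (h12 : o₁ ≤ o₂) (h2 : o₂ < o),
        mp o₁ o₂ h12 (h2.le.trans ho) ≫ legs o₂ h2 = legs o₁ (lt_of_le_of_lt h12 h2)) →
      ∃! w : F o ho ⟶ Z, ∀ (o' : Ordinal) (h' : o' < o),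
        mp o' o h'.le ho ≫ w = legs o' h'
  topEq : F len le_rfl = Y
  comp_eq : eqToHom bot.symm ≫ mp 0 len (zero_le ..) le_rfl ≫ eqToHom topEq = f
/-! # Statement 4

For a coherator `𝔊` for `n`-groupoids, every model is fibrant: the map to the terminal
object has the right lifting property with respect to every source map
`σ_k : D_k → D_{k+1}`; equivalently, the lifts exist because each `σ_k` admits a
retraction in `𝔊`. -/

theorem statement4 {n : ℕ∞} (Th : GlobTheory n) (hTh : IsGpdCoherator Th) :
    (∀ (j k : Gle n) (hj : j.val + 1 = k.val),
      ∃ r : Th.G.obj k ⟶ Th.G.obj j,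
        Th.G.map (sg (show j.val < k.val by omega)) ≫ r = 𝟙 (Th.G.obj j)) ∧
    (∀ X : Mod Th, FibrantObj X) := by
  have key : ∀ (j k : Gle n) (hj : j.val + 1 = k.val),
      ∃ r : Th.G.obj k ⟶ Th.G.obj j,
        Th.G.map (sg (show j.val < k.val by omega)) ≫ r = 𝟙 (Th.G.obj j) := by
    intro j k hj
    -- the singleton table presenting `D_j`
    let S : DimTable n := ⟨j.val, [], j.isLe⟩
    -- the unique leg of its (trivial) globular sum
    let leg : Th.G.obj j ⟶ (Th.sum S).pt := (Th.sum S).legs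
    -- the inverse of the leg, via the colimit property
    obtain ⟨μ, hμ, -⟩ := Th.isColim S (Th.G.obj j)
      (show Pts (fun g => Th.G.obj g ⟶ Th.G.obj j) S.head S.rest S.valid from
        𝟙 (Th.G.obj j)) trivial
    have hμ' : leg ≫ μ = 𝟙 (Th.G.obj j) := hμ
    -- the parallel admissible pair `(leg, leg)` over the apex of `S`
    let p : PairOver Th := ⟨j, (Th.sum S).pt, leg, leg⟩
    have hpar : p.Parallel := fun _ _ => ⟨rfl, rfl⟩
    have hadm : AdmGpd Th p := by
      intro T hT
      have hTS : T = S := Th.obj_bij.injective hT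
      subst hTS
      show max j.val (maxL []) ≤ j.val + 1
      simp [maxL]
    obtain ⟨hfill, -⟩ := hTh.1 p hpar hadm
    obtain ⟨F⟩ := hfill k hj
    refine ⟨F.h ≫ μ, ?_⟩
    rw [← Category.assoc]
    have hs : Th.G.map (sg (show j.val < k.val by omega)) ≫ F.h = leg := F.hs
    rw [hs, hμ']
  refine ⟨key, ?_⟩
  intro X j k hj a
  obtain ⟨r, hr⟩ := key j k hj
  refine ⟨X.obj.map (op r) a, ?_⟩
  show X.obj.map (op (Th.G.map (sg (show j.val < k.val by omega))))
      (X.obj.map (op r) a) = a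
  erw [← FunctorToTypes.map_comp_apply]
  have e : op r ≫ op (Th.G.map (sg (show j.val < k.val by omega))) =
      𝟙 (op (Th.G.obj j)) := by
    show op (Th.G.map (sg (show j.val < k.val by omega)) ≫ r) = _
    rw [hr]; rfl
  rw [e]
  simp
  rfl
end GPaper
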